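/- For every integer n ≥ 5, the graph D_n is 3-regular and has girth exactly 5. -/

import Mathlib

/-- Vertices of `D n`: `Sum.inl i` is `u_{i+1}`, `Sum.inr (Sum.inl i)` is `v_{i+1}`
(for `i ∈ Fin n`), and `Sum.inr (Sum.inr j)` is `w_{j+1}` (for `j ∈ Fin (2n)`);
indices are shifted by one from the (1-based) paper notation. -/
abbrev DV (n : ℕ) := Fin n ⊕ (Fin n ⊕ Fin (2*n))

/-- Generating relation for the edges of `D n`: the cycles `u₁ u₂ … uₙ u₁`,
`v₁ v₂ … vₙ v₁`, `w₁ w₂ … w_{2n} w₁`, together with the edges `vᵢ w_{2i-1}` and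
`uᵢ w_{2i}` for `i ∈ {1, …, n}` (in 0-based indexing: `vᵢ w_{2i}` and `uᵢ w_{2i+1}`). -/
def DRel (n : ℕ) : DV n → DV n → Prop
  | Sum.inl i, Sum.inl j => (j : ℕ) = ((i : ℕ) + 1) % n
  | Sum.inr (Sum.inl i), Sum.inr (Sum.inl j) => (j : ℕ) = ((i : ℕ) + 1) % n
  | Sum.inr (Sum.inr i), Sum.inr (Sum.inr j) => (j : ℕ) = ((i : ℕ) + 1) % (2*n)
  | Sum.inr (Sum.inl i), Sum.inr (Sum.inr j) => (j : ℕ) = 2*(i : ℕ)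
  | Sum.inl i, Sum.inr (Sum.inr j) => (j : ℕ) = 2*(i : ℕ) + 1
  | _, _ => False

/-- The graph `D n`. -/
def D (n : ℕ) : SimpleGraph (DV n) := SimpleGraph.fromRel (DRel n)

/-- The perfect matching `M` of `D n`, consisting of the edges `vᵢ w_{2i-1}` and
`uᵢ w_{2i}` for `i ∈ {1, …, n}` (in 0-based indexing: `vᵢ w_{2i}` and `uᵢ w_{2i+1}`). -/
def DM (n : ℕ) : Set (Sym2 (DV n)) :=
  {e | ∃ i : Fin n,
    e = s(Sum.inr (Sum.inl i), Sum.inr (Sum.inr ⟨2*(i : ℕ), by have := i.isLt; omega⟩)) ∨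
    e = s(Sum.inl i, Sum.inr (Sum.inr ⟨2*(i : ℕ) + 1, by have := i.isLt; omega⟩))}

lemma msucc {n : ℕ} (i : ℕ) (h : i < n) :
    ((i+1) % n = i + 1 ∧ i + 1 < n) ∨ ((i+1) % n = 0 ∧ i + 1 = n) := by
  rcases Nat.lt_or_ge (i+1) n with h'|h'
  · exact Or.inl ⟨Nat.mod_eq_of_lt h', h'⟩
  · have : i + 1 = n := by omega
    subst this; exact Or.inr ⟨Nat.mod_self _, rfl⟩

lemma mpred {n : ℕ} (i : ℕ) (h : i < n) :
    ((i+n-1) % n = i - 1 ∧ 1 ≤ i) ∨ ((i+n-1) % n = n - 1 ∧ i = 0) := by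
  rcases Nat.eq_zero_or_pos i with h'|h'
  · subst h'; right
    constructor
    · simp [Nat.mod_eq_of_lt (by omega : n - 1 < n)]
    · rfl
  · left
    refine ⟨?_, h'⟩
    have : i + n - 1 = (i-1) + n := by omega
    rw [this, Nat.add_mod_right, Nat.mod_eq_of_lt (by omega)]

lemma no_tri (n : ℕ) (hn : 5 ≤ n) (a b c : DV n)
    (h1 : (D n).Adj a b) (h2 : (D n).Adj b c) (h3 : (D n).Adj c a) : False := by
  rcases a with i|i|i <;> rcases b with j|j|j <;> rcases c with k|k|k <;>
    simp [D, DRel, Fin.ext_iff] at h1 h2 h3 <;>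
    (have Hi := msucc i.1 i.2; have Hj := msucc j.1 j.2; have Hk := msucc k.1 k.2; omega)

lemma no_sq (n : ℕ) (hn : 5 ≤ n) (a b c d : DV n)
    (h1 : (D n).Adj a b) (h2 : (D n).Adj b c) (h3 : (D n).Adj c d) (h4 : (D n).Adj d a)
    (hac : a ≠ c) (hbd : b ≠ d) : False := by
  rcases a with i|i|i <;> rcases b with j|j|j <;> rcases c with k|k|k <;> rcases d with l|l|l <;>
    simp [D, DRel, Fin.ext_iff] at h1 h2 h3 h4 hac hbd <;>
    (have Hi := msucc i.1 i.2; have Hj := msucc j.1 j.2; have Hk := msucc k.1 k.2;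
     have Hl := msucc l.1 l.2; omega)

set_option linter.unreachableTactic false in
set_option linter.unusedTactic false in
set_option linter.unnecessarySeqFocus false in
open scoped Classical in
lemma Dreg (n : ℕ) (hn : 5 ≤ n) : (D n).IsRegularOfDegree 3 := by
  intro v
  have h2n : 0 < 2*n := by omega
  rcases v with i|i|i
  · have h : (D n).neighborFinset (Sum.inl i) =
        {Sum.inl ⟨((i:ℕ)+1)%n, Nat.mod_lt _ (by omega)⟩,
         Sum.inl ⟨((i:ℕ)+n-1)%n, Nat.mod_lt _ (by omega)⟩,
         Sum.inr (Sum.inr ⟨2*(i:ℕ)+1, by have := i.isLt; omega⟩)} := by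
      ext x
      simp only [SimpleGraph.mem_neighborFinset]
      rcases x with j|j|j <;>
        simp [D, DRel, Fin.ext_iff, SimpleGraph.mem_neighborFinset] <;>
        (have Hi := msucc i.1 i.2; have Hj := msucc j.1 j.2; have Hp := mpred i.1 i.2; omega)
    rw [SimpleGraph.degree, h]
    rw [Finset.card_insert_of_notMem, Finset.card_insert_of_notMem, Finset.card_singleton] <;>
      first | (simp [Fin.ext_iff]; done) | (simp [Fin.ext_iff]; have Hi := msucc i.1 i.2; have Hp := mpred i.1 i.2; omega) | norm_num
  · have h : (D n).neighborFinset (Sum.inr (Sum.inl i)) =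
        {Sum.inr (Sum.inl ⟨((i:ℕ)+1)%n, Nat.mod_lt _ (by omega)⟩),
         Sum.inr (Sum.inl ⟨((i:ℕ)+n-1)%n, Nat.mod_lt _ (by omega)⟩),
         Sum.inr (Sum.inr ⟨2*(i:ℕ), by have := i.isLt; omega⟩)} := by
      ext x
      simp only [SimpleGraph.mem_neighborFinset]
      rcases x with j|j|j <;>
        simp [D, DRel, Fin.ext_iff, SimpleGraph.mem_neighborFinset] <;>
        (have Hi := msucc i.1 i.2; have Hj := msucc j.1 j.2; have Hp := mpred i.1 i.2; omega)
    rw [SimpleGraph.degree, h]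
    rw [Finset.card_insert_of_notMem, Finset.card_insert_of_notMem, Finset.card_singleton] <;>
      first | (simp [Fin.ext_iff]; done) | (simp [Fin.ext_iff]; have Hi := msucc i.1 i.2; have Hp := mpred i.1 i.2; omega) | norm_num
  · rcases Nat.even_or_odd (i:ℕ) with he|ho
    · have h : (D n).neighborFinset (Sum.inr (Sum.inr i)) =
          {Sum.inr (Sum.inr ⟨((i:ℕ)+1)%(2*n), Nat.mod_lt _ h2n⟩),
           Sum.inr (Sum.inr ⟨((i:ℕ)+2*n-1)%(2*n), Nat.mod_lt _ h2n⟩),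
           Sum.inr (Sum.inl ⟨(i:ℕ)/2, by have := i.isLt; omega⟩)} := by
        ext x
        simp only [SimpleGraph.mem_neighborFinset]
        obtain ⟨m, hm⟩ := he
        rcases x with j|j|j <;>
          simp [D, DRel, Fin.ext_iff, SimpleGraph.mem_neighborFinset] <;>
          (have Hi := msucc i.1 i.2; have Hj := msucc j.1 j.2; have Hp := mpred i.1 i.2; omega)
      rw [SimpleGraph.degree, h]
      obtain ⟨m, hm⟩ := he
      rw [Finset.card_insert_of_notMem, Finset.card_insert_of_notMem, Finset.card_singleton] <;>
        first | (simp [Fin.ext_iff]; done) | (simp [Fin.ext_iff]; have Hi := msucc i.1 i.2; have Hp := mpred i.1 i.2; omega) | norm_num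
    · have h : (D n).neighborFinset (Sum.inr (Sum.inr i)) =
          {Sum.inr (Sum.inr ⟨((i:ℕ)+1)%(2*n), Nat.mod_lt _ h2n⟩),
           Sum.inr (Sum.inr ⟨((i:ℕ)+2*n-1)%(2*n), Nat.mod_lt _ h2n⟩),
           Sum.inl ⟨(i:ℕ)/2, by have := i.isLt; omega⟩} := by
        ext x
        simp only [SimpleGraph.mem_neighborFinset]
        obtain ⟨m, hm⟩ := ho
        rcases x with j|j|j <;>
          simp [D, DRel, Fin.ext_iff, SimpleGraph.mem_neighborFinset] <;>
          (have Hi := msucc i.1 i.2; have Hj := msucc j.1 j.2; have Hp := mpred i.1 i.2; omega)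
      rw [SimpleGraph.degree, h]
      obtain ⟨m, hm⟩ := ho
      rw [Finset.card_insert_of_notMem, Finset.card_insert_of_notMem, Finset.card_singleton] <;>
        first | (simp [Fin.ext_iff]; done) | (simp [Fin.ext_iff]; have Hi := msucc i.1 i.2; have Hp := mpred i.1 i.2; omega) | norm_num

section cyc
variable (n : ℕ) (hn : 5 ≤ n)

def u0 : DV n := Sum.inl ⟨0, by omega⟩
def u1 : DV n := Sum.inl ⟨1, by omega⟩
def w1 : DV n := Sum.inr (Sum.inr ⟨1, by omega⟩)
def w2 : DV n := Sum.inr (Sum.inr ⟨2, by omega⟩)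
def w3 : DV n := Sum.inr (Sum.inr ⟨3, by omega⟩)

lemma a1 : (D n).Adj (u0 n hn) (u1 n hn) := by
  simp [D, DRel, u0, u1, Fin.ext_iff, Nat.mod_eq_of_lt (by omega : 1 < n)]
lemma a2 : (D n).Adj (u1 n hn) (w3 n hn) := by
  simp [D, DRel, u1, w3]
lemma a3 : (D n).Adj (w3 n hn) (w2 n hn) := by
  simp [D, DRel, w2, w3, Fin.ext_iff, Nat.mod_eq_of_lt (by omega : 3 < 2*n)]
lemma a4 : (D n).Adj (w2 n hn) (w1 n hn) := by
  simp [D, DRel, w1, w2, Fin.ext_iff, Nat.mod_eq_of_lt (by omega : 2 < 2*n)]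
lemma a5 : (D n).Adj (w1 n hn) (u0 n hn) := by
  simp [D, DRel, u0, w1]

/-- An explicit 5-cycle `u₁ u₂ w₄ w₃ w₂ u₁` (in the paper's 1-based notation). -/
def c5 : (D n).Walk (u0 n hn) (u0 n hn) :=
  .cons (a1 n hn) (.cons (a2 n hn) (.cons (a3 n hn) (.cons (a4 n hn) (.cons (a5 n hn) .nil))))

lemma c5_cycle : (c5 n hn).IsCycle := by
  constructor
  · constructor
    · constructor
      simp only [c5, SimpleGraph.Walk.edges_cons, SimpleGraph.Walk.edges_nil]
      simp [c5, u0, u1, w1, w2, w3, Fin.ext_iff]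
    · simp [c5]
  · simp only [c5, SimpleGraph.Walk.support_cons, SimpleGraph.Walk.support_nil, List.tail_cons]
    simp [c5, u0, u1, w1, w2, w3, Fin.ext_iff]

lemma c5_len : (c5 n hn).length = 5 := by simp [c5]

end cyc

lemma no_short (n : ℕ) (hn : 5 ≤ n) {a : DV n} (w : (D n).Walk a a) (hw : w.IsCycle) :
    5 ≤ w.length := by
  by_contra hlen
  push_neg at hlen
  have h3 := hw.three_le_length
  cases w with
  | nil => simp at h3
  | cons h1 p =>
    cases p with
    | nil => simp at h3
    | cons h2 q =>
      cases q with
      | nil => simp at h3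
      | cons hh3 r =>
        cases r with
        | nil => exact no_tri n hn _ _ _ h1 h2 hh3
        | cons h4 s =>
          cases s with
          | nil =>
            have hnd := hw.support_nodup
            simp [List.nodup_cons] at hnd
            refine no_sq n hn _ _ _ _ h1 h2 hh3 h4 ?_ ?_
            · intro h; subst h; tauto
            · intro h; subst h; tauto
          | cons h5 t =>
            simp [SimpleGraph.Walk.length_cons] at hlen h3
            omega

open scoped Classical in
/-- For every integer `n ≥ 5`, the graph `D n` is 3-regular and has girth exactly 5. -/
theorem stmt_7 (n : ℕ) (hn : 5 ≤ n) :
    (D n).IsRegularOfDegree 3 ∧ (D n).egirth = 5 := by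
  refine ⟨Dreg n hn, ?_⟩
  have hle : (D n).egirth ≤ ((c5 n hn).length : ℕ∞) := by
    rw [SimpleGraph.egirth]
    exact iInf_le_of_le _ (iInf_le_of_le (c5 n hn) (iInf_le_of_le (c5_cycle n hn) le_rfl))
  rw [c5_len] at hle
  have hge : (5 : ℕ∞) ≤ (D n).egirth := by
    rw [SimpleGraph.le_egirth]
    intro a w hw
    exact_mod_cast no_short n hn w hw
  exact le_antisymm (by exact_mod_cast hle) hge
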